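/- The push-forward scheme ρ^{n+1}_{i,j} = (1/(Δx¹Δx²)) Σ_{r,s} ρ^n_{r,s} Γ^{1,n}_{r,s} Γ^{2,n}_{r,s}, with Γ^{1,n}_{r,s} = (X^{1,n}_{r,s})⁺ δ_{r,i-1} + (X^{1,n}_{r,s})⁻ δ_{r,i+1} + (Δx¹ − |X^{1,n}_{r,s}|) δ_{r,i} and analogously for Γ^{2,n}, conserves total mass: Σ_{i,j} ρ^{n+1}_{i,j} = Σ_{i,j} ρ^n_{i,j}, provided the CFL condition |X^{1,n}_{i,j}| ≤ Δx¹ and |X^{2,n}_{i,j}| ≤ Δx² holds for all i,j, and we work on all of ℤ² (no boundary). -/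
import Mathlib

open scoped BigOperators

noncomputable def kron (a b : ℤ) : ℝ := if a = b then 1 else 0

noncomputable def Gamma1 (dx1 : ℝ) (X1 : ℤ × ℤ → ℝ) (i r s : ℤ) : ℝ :=
  max (X1 (r, s)) 0 * kron r (i - 1) + max (-(X1 (r, s))) 0 * kron r (i + 1)
    + (dx1 - |X1 (r, s)|) * kron r i

noncomputable def Gamma2 (dx2 : ℝ) (X2 : ℤ × ℤ → ℝ) (j r s : ℤ) : ℝ :=
  max (X2 (r, s)) 0 * kron s (j - 1) + max (-(X2 (r, s))) 0 * kron s (j + 1)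
    + (dx2 - |X2 (r, s)|) * kron s j

noncomputable def pushForward (dx1 dx2 : ℝ) (X1 X2 : ℤ × ℤ → ℝ) (ρ : ℤ × ℤ → ℝ)
    (i j : ℤ) : ℝ :=
  (1 / (dx1 * dx2)) * ∑ᶠ p : ℤ × ℤ, ρ p * Gamma1 dx1 X1 i p.1 p.2 * Gamma2 dx2 X2 j p.1 p.2

lemma Gamma1_zero (dx1 : ℝ) (X1 : ℤ × ℤ → ℝ) {i r : ℤ} (s : ℤ)
    (h1 : i ≠ r - 1) (h2 : i ≠ r) (h3 : i ≠ r + 1) : Gamma1 dx1 X1 i r s = 0 := by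
  simp only [Gamma1, kron]
  rw [if_neg (by omega), if_neg (by omega), if_neg (by omega)]; ring

lemma Gamma2_zero (dx2 : ℝ) (X2 : ℤ × ℤ → ℝ) {j s : ℤ} (r : ℤ)
    (h1 : j ≠ s - 1) (h2 : j ≠ s) (h3 : j ≠ s + 1) : Gamma2 dx2 X2 j r s = 0 := by
  simp only [Gamma2, kron]
  rw [if_neg (by omega), if_neg (by omega), if_neg (by omega)]; ring

lemma Gamma1_sum (dx1 : ℝ) (X1 : ℤ × ℤ → ℝ) (r s : ℤ) :
    ∑ i ∈ ({r - 1, r, r + 1} : Finset ℤ), Gamma1 dx1 X1 i r s = dx1 := by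
  have hA : Gamma1 dx1 X1 (r - 1) r s = max (-(X1 (r, s))) 0 := by
    simp only [Gamma1, kron]; split_ifs <;> first | ring1 | (exfalso; omega)
  have hB : Gamma1 dx1 X1 r r s = dx1 - |X1 (r, s)| := by
    simp only [Gamma1, kron]; split_ifs <;> first | ring1 | (exfalso; omega)
  have hC : Gamma1 dx1 X1 (r + 1) r s = max (X1 (r, s)) 0 := by
    simp only [Gamma1, kron]; split_ifs <;> first | ring1 | (exfalso; omega)
  rw [Finset.sum_insert (by simp only [Finset.mem_insert, Finset.mem_singleton]; omega), Finset.sum_insert (by simp only [Finset.mem_insert, Finset.mem_singleton]; omega),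
    Finset.sum_singleton, hA, hB, hC]
  have := max_zero_add_max_neg_zero_eq_abs_self (X1 (r, s))
  linarith

lemma Gamma2_sum (dx2 : ℝ) (X2 : ℤ × ℤ → ℝ) (r s : ℤ) :
    ∑ j ∈ ({s - 1, s, s + 1} : Finset ℤ), Gamma2 dx2 X2 j r s = dx2 := by
  have hA : Gamma2 dx2 X2 (s - 1) r s = max (-(X2 (r, s))) 0 := by
    simp only [Gamma2, kron]; split_ifs <;> first | ring1 | (exfalso; omega)
  have hB : Gamma2 dx2 X2 s r s = dx2 - |X2 (r, s)| := by
    simp only [Gamma2, kron]; split_ifs <;> first | ring1 | (exfalso; omega)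
  have hC : Gamma2 dx2 X2 (s + 1) r s = max (X2 (r, s)) 0 := by
    simp only [Gamma2, kron]; split_ifs <;> first | ring1 | (exfalso; omega)
  rw [Finset.sum_insert (by simp only [Finset.mem_insert, Finset.mem_singleton]; omega), Finset.sum_insert (by simp only [Finset.mem_insert, Finset.mem_singleton]; omega),
    Finset.sum_singleton, hA, hB, hC]
  have := max_zero_add_max_neg_zero_eq_abs_self (X2 (r, s))
  linarith

theorem stmt0_mass_conservation (dx1 dx2 : ℝ) (hdx1 : 0 < dx1) (hdx2 : 0 < dx2)
    (X1 X2 : ℤ × ℤ → ℝ) (ρ : ℤ × ℤ → ℝ) (hρ : (Function.support ρ).Finite)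
    (hCFL : ∀ p : ℤ × ℤ, |X1 p| ≤ dx1 ∧ |X2 p| ≤ dx2) :
    ∑ᶠ p : ℤ × ℤ, pushForward dx1 dx2 X1 X2 ρ p.1 p.2 = ∑ᶠ p : ℤ × ℤ, ρ p := by
  classical
  set S : Finset (ℤ × ℤ) := hρ.toFinset with hS
  have hmemS : ∀ p : ℤ × ℤ, p ∈ S ↔ ρ p ≠ 0 := by
    intro p; simp [hS, Set.Finite.mem_toFinset, Function.mem_support]
  set N : ℤ × ℤ → Finset (ℤ × ℤ) :=
    fun p => ({p.1 - 1, p.1, p.1 + 1} : Finset ℤ) ×ˢ ({p.2 - 1, p.2, p.2 + 1} : Finset ℤ)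
    with hN
  set T : Finset (ℤ × ℤ) := S.biUnion N with hT
  have hinner : ∀ i j : ℤ,
      pushForward dx1 dx2 X1 X2 ρ i j =
        (1 / (dx1 * dx2)) * ∑ p ∈ S, ρ p * Gamma1 dx1 X1 i p.1 p.2 * Gamma2 dx2 X2 j p.1 p.2 := by
    intro i j
    unfold pushForward
    congr 1
    apply finsum_eq_sum_of_support_subset
    intro p hp
    rw [Function.mem_support] at hp
    have hne : ρ p ≠ 0 := fun h0 => hp (by rw [h0]; ring)
    exact Finset.mem_coe.2 ((hmemS p).2 hne)
  have houter : Function.support (fun q : ℤ × ℤ => pushForward dx1 dx2 X1 X2 ρ q.1 q.2) ⊆ T := by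
    intro q hq
    rw [Function.mem_support] at hq
    by_contra hqT
    apply hq
    rw [hinner q.1 q.2]
    rw [Finset.sum_eq_zero, mul_zero]
    intro p hpS
    have hqN : q ∉ N p := fun h => hqT (Finset.mem_coe.2 (Finset.mem_biUnion.2 ⟨p, hpS, h⟩))
    simp only [hN, Finset.mem_product, Finset.mem_insert, Finset.mem_singleton, not_and_or,
      not_or] at hqN
    rcases hqN with ⟨h1, h2, h3⟩ | ⟨h1, h2, h3⟩
    · rw [Gamma1_zero dx1 X1 p.2 h1 h2 h3]; ring
    · rw [Gamma2_zero dx2 X2 p.1 h1 h2 h3]; ring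
  rw [finsum_eq_sum_of_support_subset _ houter,
    finsum_eq_sum_of_support_subset ρ
      (by rw [hS]; simp [Set.Finite.coe_toFinset] : Function.support ρ ⊆ (S : Set (ℤ × ℤ)))]
  calc ∑ q ∈ T, pushForward dx1 dx2 X1 X2 ρ q.1 q.2
      = ∑ q ∈ T, ∑ p ∈ S,
          (1 / (dx1 * dx2)) * (ρ p * Gamma1 dx1 X1 q.1 p.1 p.2 * Gamma2 dx2 X2 q.2 p.1 p.2) := by
        refine Finset.sum_congr rfl fun q _ => ?_
        rw [hinner q.1 q.2, Finset.mul_sum]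
    _ = ∑ p ∈ S, ∑ q ∈ T,
          (1 / (dx1 * dx2)) * (ρ p * Gamma1 dx1 X1 q.1 p.1 p.2 * Gamma2 dx2 X2 q.2 p.1 p.2) :=
        Finset.sum_comm
    _ = ∑ p ∈ S, ρ p := by
        refine Finset.sum_congr rfl fun p hpS => ?_
        have hsub : N p ⊆ T := fun q hq => Finset.mem_biUnion.2 ⟨p, hpS, hq⟩
        rw [← Finset.sum_subset hsub]
        · have hfac : ∑ q ∈ N p,
              (1 / (dx1 * dx2)) * (ρ p * Gamma1 dx1 X1 q.1 p.1 p.2 * Gamma2 dx2 X2 q.2 p.1 p.2)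
              = (1 / (dx1 * dx2)) * ρ p *
                ∑ q ∈ N p, Gamma1 dx1 X1 q.1 p.1 p.2 * Gamma2 dx2 X2 q.2 p.1 p.2 := by
            rw [Finset.mul_sum]; exact Finset.sum_congr rfl fun q _ => by ring
          have hval : ∑ q ∈ N p, Gamma1 dx1 X1 q.1 p.1 p.2 * Gamma2 dx2 X2 q.2 p.1 p.2
              = dx1 * dx2 := by
            simp only [hN, Finset.sum_product]
            have h2 : ∀ i ∈ ({p.1 - 1, p.1, p.1 + 1} : Finset ℤ),
                ∑ j ∈ ({p.2 - 1, p.2, p.2 + 1} : Finset ℤ),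
                  Gamma1 dx1 X1 i p.1 p.2 * Gamma2 dx2 X2 j p.1 p.2
                = Gamma1 dx1 X1 i p.1 p.2 * dx2 := by
              intro i _
              rw [← Finset.mul_sum, Gamma2_sum]
            rw [Finset.sum_congr rfl h2, ← Finset.sum_mul, Gamma1_sum]
          rw [hfac, hval]
          field_simp
        · intro q hqT hqN
          simp only [hN, Finset.mem_product, Finset.mem_insert, Finset.mem_singleton, not_and_or,
            not_or] at hqN
          rcases hqN with ⟨h1, h2, h3⟩ | ⟨h1, h2, h3⟩
          · rw [Gamma1_zero dx1 X1 p.2 h1 h2 h3]; ring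
          · rw [Gamma2_zero dx2 X2 p.1 h1 h2 h3]; ring
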